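/- Let G be a graph with m edges, and suppose every vertex cover of G has size at least k'. Let D_G be the set consisting of all edge indicators, all single-coordinate perturbations of the 1-coordinates of edge indicators, and the all-zeros string. Then every decision tree agreeing with IsEdge_G on all of D_G has size at least k' + m. -/

import Mathlib

/-!
Follow the path of the all-zeros input from the root: it only ever goes left. An edge `e`
leaves this spine at the first queried vertex `q ∈ e`, so the spine queries form a vertex cover.
In the right subtree at `q`, every edge `{q, a}` leaving there is accepted while the indicator of
`q` alone is rejected, so the path of that indicator must query every such `a`. Hence the right
subtree has at least as many nodes as edges leaving at `q`, and summing along the spine gives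
size ≥ (cover size) + (number of edges). The indicator of `q` lies in `D_G` as the perturbation
of the edge `{q, a}` at `a`.
-/

open Classical

inductive DTree (α : Type) : Type where
  | leaf (b : Bool) : DTree α
  | node (i : α) (l r : DTree α) : DTree α

def DTree.eval {α : Type} : DTree α → (α → Bool) → Bool
  | .leaf b, _ => b
  | .node i l r, x => if x i then r.eval x else l.eval x

def DTree.size {α : Type} : DTree α → ℕ
  | .leaf _ => 0
  | .node _ l r => 1 + l.size + r.size

noncomputable def edgeInd {n : ℕ} (e : Sym2 (Fin n)) : Fin n → Bool :=
  fun i => decide (i ∈ e)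

noncomputable def isEdge {n : ℕ} (G : SimpleGraph (Fin n)) (x : Fin n → Bool) : Bool :=
  decide (∃ e ∈ G.edgeSet, x = edgeInd e)

/-- The coreset D_G: edge indicators, flips of their 1-coordinates, and the zero string. -/
noncomputable def DG {n : ℕ} (G : SimpleGraph (Fin n)) : Set (Fin n → Bool) :=
  {x | ∃ e ∈ G.edgeSet, x = edgeInd e} ∪
  {x | ∃ e ∈ G.edgeSet, ∃ i, i ∈ e ∧ x = Function.update (edgeInd e) i false} ∪
  {fun _ => false}

open Finset SimpleGraph

namespace DTree

variable {α : Type}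

def path : DTree α → (α → Bool) → List α
  | .leaf _, _ => []
  | .node i l r, x => i :: if x i then r.path x else l.path x

theorem length_path_le_size (T : DTree α) (x : α → Bool) : (T.path x).length ≤ T.size := by
  induction T with
  | leaf b => simp [path]
  | node i l r ihl ihr =>
    simp only [path, size, List.length_cons]
    split <;> omega

theorem exists_mem_path_ne_of_eval_ne {T : DTree α} {x y : α → Bool}
    (h : T.eval x ≠ T.eval y) : ∃ i ∈ T.path x, x i ≠ y i := by
  induction T with
  | leaf b => exact absurd rfl h
  | node i l r ihl ihr =>
    by_cases hxy : x i = y i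
    · cases hx : x i with
      | false =>
        have hy : y i = false := hxy ▸ hx
        obtain ⟨j, hj, hne⟩ := ihl (by simpa [eval, hx, hy] using h)
        exact ⟨j, by simp [path, hx, hj], hne⟩
      | true =>
        have hy : y i = true := hxy ▸ hx
        obtain ⟨j, hj, hne⟩ := ihr (by simpa [eval, hx, hy] using h)
        exact ⟨j, by simp [path, hx, hj], hne⟩
    · exact ⟨i, List.mem_cons_self, hxy⟩

end DTree

variable {n : ℕ}

def vertexInd (v : Fin n) : Fin n → Bool :=
  fun i => decide (i = v)

theorem edgeInd_apply_of_mem {e : Sym2 (Fin n)} {i : Fin n} (h : i ∈ e) : edgeInd e i = true := by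
  simp [edgeInd, h]

/-- The path of the indicator of `q` has to query the other endpoint of each edge. -/
theorem card_star_le_size (T : DTree (Fin n)) (q : Fin n) (E : Finset (Sym2 (Fin n)))
    (hq : ∀ e ∈ E, q ∈ e) (h_edge : ∀ e ∈ E, T.eval (edgeInd e) = true)
    (h_vertex : T.eval (vertexInd q) = false) : #E ≤ T.size := by
  have hsub : E ⊆ (T.path (vertexInd q)).toFinset.image (fun i => s(q, i)) := by
    intro e he
    obtain ⟨i, hi, hne⟩ := DTree.exists_mem_path_ne_of_eval_ne (x := vertexInd q) (y := edgeInd e)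
      (by rw [h_vertex, h_edge e he]; decide)
    have hiq : q ≠ i := by
      rintro rfl
      exact hne (by simp [vertexInd, edgeInd_apply_of_mem (hq e he)])
    have hie : i ∈ e := by
      by_contra hie
      exact hne (by simp [vertexInd, edgeInd, hie, hiq.symm])
    exact mem_image.mpr
      ⟨i, List.mem_toFinset.mpr hi, ((Sym2.mem_and_mem_iff hiq).mp ⟨hq e he, hie⟩).symm⟩
  calc #E ≤ #((T.path (vertexInd q)).toFinset.image (fun i => s(q, i))) := card_le_card hsub
    _ ≤ #(T.path (vertexInd q)).toFinset := card_image_le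
    _ ≤ (T.path (vertexInd q)).length := List.toFinset_card_le _
    _ ≤ T.size := T.length_path_le_size _

theorem exists_vertexCover_card_add_card_le_size (T : DTree (Fin n)) (E : Finset (Sym2 (Fin n)))
    (h_edge : ∀ e ∈ E, T.eval (edgeInd e) = true)
    (h_vertex : ∀ e ∈ E, ∀ v ∈ e, T.eval (vertexInd v) = false) :
    ∃ C : Finset (Fin n), (∀ e ∈ E, ∃ v ∈ C, v ∈ e) ∧ #C + #E ≤ T.size := by
  induction T generalizing E with
  | leaf b =>
    have hE : E = ∅ := by
      refine eq_empty_of_forall_notMem fun e he => ?_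
      exact absurd ((h_edge e he).symm.trans (h_vertex e he _ e.out_fst_mem)) (by decide)
    exact ⟨∅, by simp [hE]⟩
  | node q l r ihl ihr =>
    have eval_edgeInd_of_notMem {e : Sym2 (Fin n)} (hq : q ∉ e) :
        (DTree.node q l r).eval (edgeInd e) = l.eval (edgeInd e) := by
      simp [DTree.eval, edgeInd, hq]
    have eval_vertexInd_of_ne {v : Fin n} (hv : q ≠ v) :
        (DTree.node q l r).eval (vertexInd v) = l.eval (vertexInd v) := by
      simp [DTree.eval, vertexInd, hv]
    obtain ⟨C, hC, hCcard⟩ := ihl (E.filter (q ∉ ·))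
      (fun e he => by
        rw [mem_filter] at he
        rw [← eval_edgeInd_of_notMem he.2, h_edge e he.1])
      (fun e he v hv => by
        rw [mem_filter] at he
        rw [← eval_vertexInd_of_ne (fun h => he.2 (h ▸ hv)), h_vertex e he.1 v hv])
    have hstar : #(E.filter (q ∈ ·)) ≤ r.size := by
      obtain hempty | ⟨e₀, he₀⟩ := (E.filter (q ∈ ·)).eq_empty_or_nonempty
      · simp [hempty]
      refine card_star_le_size r q _ (fun e he => (mem_filter.mp he).2) ?_ ?_
      · intro e he
        rw [mem_filter] at he
        simpa [DTree.eval, edgeInd_apply_of_mem he.2] using h_edge e he.1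
      · rw [mem_filter] at he₀
        simpa [DTree.eval, vertexInd] using h_vertex e₀ he₀.1 q he₀.2
    refine ⟨insert q C, fun e he => ?_, ?_⟩
    · by_cases hq : q ∈ e
      · exact ⟨q, mem_insert_self q C, hq⟩
      · obtain ⟨v, hv, hve⟩ := hC e (mem_filter.mpr ⟨he, hq⟩)
        exact ⟨v, mem_insert_of_mem hv, hve⟩
    · have hsplit := card_filter_add_card_filter_not (s := E) (q ∈ ·)
      have := card_insert_le q C
      simp only [DTree.size]
      omega

theorem edgeInd_mem_DG {G : SimpleGraph (Fin n)} {e : Sym2 (Fin n)} (he : e ∈ G.edgeSet) :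
    edgeInd e ∈ DG G :=
  Or.inl (Or.inl ⟨e, he, rfl⟩)

theorem isEdge_edgeInd {G : SimpleGraph (Fin n)} {e : Sym2 (Fin n)} (he : e ∈ G.edgeSet) :
    isEdge G (edgeInd e) = true :=
  decide_eq_true ⟨e, he, rfl⟩

theorem isEdge_vertexInd (G : SimpleGraph (Fin n)) (v : Fin n) :
    isEdge G (vertexInd v) = false := by
  refine decide_eq_false fun ⟨e, he, hv⟩ => ?_
  induction e using Sym2.ind with
  | _ a b =>
    have ha : a = v := by simpa [vertexInd, edgeInd] using congrFun hv a
    have hb : b = v := by simpa [vertexInd, edgeInd] using congrFun hv b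
    exact G.ne_of_adj he (ha.trans hb.symm)

theorem vertexInd_mem_DG {G : SimpleGraph (Fin n)} {e : Sym2 (Fin n)} (he : e ∈ G.edgeSet)
    {v : Fin n} (hv : v ∈ e) : vertexInd v ∈ DG G := by
  obtain ⟨w, rfl⟩ := Sym2.mem_iff_exists.mp hv
  have hvw : v ≠ w := G.ne_of_adj he
  refine Or.inl (Or.inr ⟨s(v, w), he, w, Sym2.mem_mk_right v w, funext fun i => ?_⟩)
  by_cases hiw : i = w
  · simp [vertexInd, hiw, hvw.symm]
  · simp [vertexInd, edgeInd, hiw]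

/-- if every vertex cover of G (m edges) has size at least k', then every
decision tree agreeing with IsEdge_G on all of the coreset D_G has size at least k' + m. -/
theorem stmt15 {n : ℕ} (G : SimpleGraph (Fin n)) [DecidableRel G.Adj] (k' : ℕ)
    (hk : ∀ C : Finset (Fin n), (∀ ⦃u v : Fin n⦄, G.Adj u v → u ∈ C ∨ v ∈ C) → k' ≤ C.card)
    (T : DTree (Fin n)) (hT : ∀ x ∈ DG G, T.eval x = isEdge G x) :
    k' + G.edgeFinset.card ≤ T.size := by
  obtain ⟨C, hC, hsize⟩ := exists_vertexCover_card_add_card_le_size T G.edgeFinset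
    (fun e he => (hT _ (edgeInd_mem_DG (mem_edgeFinset.mp he))).trans
      (isEdge_edgeInd (mem_edgeFinset.mp he)))
    (fun e he v hv => (hT _ (vertexInd_mem_DG (mem_edgeFinset.mp he) hv)).trans
      (isEdge_vertexInd G v))
  have hcover : ∀ ⦃u v : Fin n⦄, G.Adj u v → u ∈ C ∨ v ∈ C := fun u v huv => by
    obtain ⟨w, hw, hwuv⟩ := hC s(u, v) (G.mem_edgeFinset.mpr huv)
    rcases Sym2.mem_iff.mp hwuv with rfl | rfl
    exacts [Or.inl hw, Or.inr hw]
  exact (add_le_add_left (hk C hcover) _).trans hsize
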